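/- For every ε ∈ (−1,1), every j₀ ∈ ℤ, and every real z with |z| < 1, the generating function of the probabilities of being at the origin when starting from site j₀ satisfies (Σ_{n≥0} P_n(0|j₀) z^n) · (Σ_{n≥0} (ε/2)_n ((ε+1)/2)_n / (n!)² · z^{2n}) = (z/2)^{|j₀|} · ((1+ε)_{|j₀|} / |j₀|!) · Σ_{n≥0} ((1+ε+|j₀|)/2)_n ((2+ε+|j₀|)/2)_n / ((|j₀|+1)_n n!) · z^{2n}. -/

import Mathlib

/-!
With `F_j(z) = ∑ Pₙ(0|j) zⁿ`, first-step analysis gives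
`F_j = δ_{j0} + z (R(j) F_{j+1} + L(j) F_{j-1})`, so the products `F_j G` satisfy the same
linear recursion with source term `δ_{j0} G`; the recursion determines their coefficients by
induction on the degree, so it suffices that the right-hand sides satisfy it as well.
By the duplication formula `(x)_{2k} = 4ᵏ (x/2)ₖ ((x+1)/2)ₖ`, the coefficient of `z^{|j|+2k}`
on the right is `(1+ε)_{|j|+2k} / (2^{|j|+2k} (|j|+k)! k!)`, and in this form the recursion
reduces to three contiguous relations checked by direct computation. Absolute convergence for
`|z| < 1` comes from `0 ≤ Pₙ ≤ 1` and `|(ε/2)ₖ ((ε+1)/2)ₖ| ≤ (k!)²`.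
-/


/-- Probability of a right step in the Gillis walk. -/
noncomputable def gR (ε : ℝ) (j : ℤ) : ℝ :=
  if j = 0 then 1 / 2 else (1 - ε / (j : ℝ)) / 2

/-- Probability of a left step in the Gillis walk. -/
noncomputable def gL (ε : ℝ) (j : ℤ) : ℝ :=
  if j = 0 then 1 / 2 else (1 + ε / (j : ℝ)) / 2

/-- Occupation probabilities of the Gillis walk started at site `j₀`:
`gPfrom ε j₀ n j` is the probability of being at site `j` after `n` steps. -/
noncomputable def gPfrom (ε : ℝ) (j₀ : ℤ) : ℕ → ℤ → ℝ
  | 0, j => if j = j₀ then 1 else 0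
  | n + 1, j => gR ε (j - 1) * gPfrom ε j₀ n (j - 1) + gL ε (j + 1) * gPfrom ε j₀ n (j + 1)

/-- Pochhammer symbol `(x)ₙ = x (x+1) ⋯ (x+n-1)`. -/
noncomputable def poch (x : ℝ) (n : ℕ) : ℝ := ∏ i ∈ Finset.range n, (x + i)

open Finset Nat

namespace Gillis

lemma poch_succ (x : ℝ) (n : ℕ) : poch x (n + 1) = poch x n * (x + n) :=
  prod_range_succ _ _

lemma poch_add (x : ℝ) (m n : ℕ) : poch x (m + n) = poch x m * poch (x + m) n := by
  simp only [poch, prod_range_add, cast_add, add_assoc]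

lemma poch_one (n : ℕ) : poch 1 n = n ! := by
  induction n with
  | zero => simp [poch]
  | succ n ih => rw [poch_succ, ih, factorial_succ]; push_cast; ring

lemma poch_succ' (x : ℝ) (n : ℕ) : poch x (n + 1) = x * poch (x + 1) n := by
  rw [add_comm, poch_add]
  simp [poch]

lemma factorial_mul_poch (m k : ℕ) : (m ! : ℝ) * poch (m + 1) k = (m + k)! := by
  rw [← poch_one, ← poch_one, poch_add, add_comm 1]

lemma poch_two_mul (x : ℝ) (k : ℕ) :
    poch x (2 * k) = 2 ^ (2 * k) * poch (x / 2) k * poch ((x + 1) / 2) k := by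
  induction k with
  | zero => simp [poch]
  | succ k ih =>
    rw [show 2 * (k + 1) = 2 * k + 1 + 1 by ring, poch_succ, poch_succ, ih, poch_succ, poch_succ]
    push_cast
    ring

lemma abs_poch_le {x y : ℝ} (h : |x| ≤ y) (n : ℕ) : |poch x n| ≤ poch y n := by
  rw [poch, poch, abs_prod]
  refine prod_le_prod (fun _ _ => abs_nonneg _) fun i _ => ?_
  calc |x + i| ≤ |x| + i := (abs_add_le _ _).trans (by simp)
    _ ≤ y + i := by linarith

lemma gR_neg (ε : ℝ) (j : ℤ) : gR ε (-j) = gL ε j := by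
  unfold gR gL
  split_ifs <;> first | rfl | omega | (push_cast; ring)

lemma gL_neg (ε : ℝ) (j : ℤ) : gL ε (-j) = gR ε j := by
  rw [← gR_neg, neg_neg]

lemma gR_add_gL (ε : ℝ) (j : ℤ) : gR ε j + gL ε j = 1 := by
  unfold gR gL
  split_ifs <;> ring

lemma abs_div_intCast_le_one {ε : ℝ} (hε : |ε| ≤ 1) {j : ℤ} (hj : j ≠ 0) :
    |ε / j| ≤ 1 := by
  rw [abs_div]
  refine div_le_one_of_le₀ (hε.trans ?_) (abs_nonneg _)
  exact_mod_cast Int.one_le_abs hj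

lemma gR_nonneg {ε : ℝ} (hε : |ε| ≤ 1) (j : ℤ) : 0 ≤ gR ε j := by
  unfold gR
  split_ifs with hj
  · norm_num
  · linarith [(abs_le.1 (abs_div_intCast_le_one hε hj)).2]

lemma gL_nonneg {ε : ℝ} (hε : |ε| ≤ 1) (j : ℤ) : 0 ≤ gL ε j := by
  rw [← gR_neg]
  exact gR_nonneg hε _

lemma gPfrom_succ_eq_first_step (ε : ℝ) (n : ℕ) :
    ∀ j₀ t : ℤ, gPfrom ε j₀ (n + 1) t =
      gR ε j₀ * gPfrom ε (j₀ + 1) n t + gL ε j₀ * gPfrom ε (j₀ - 1) n t := by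
  induction n with
  | zero =>
    intro j₀ t
    simp only [gPfrom]
    rcases eq_or_ne t (j₀ + 1) with rfl | h₁
    · simp [show j₀ + 1 + 1 ≠ j₀ by omega, show j₀ + 1 ≠ j₀ - 1 by omega]
    rcases eq_or_ne t (j₀ - 1) with rfl | h₂
    · simp [show j₀ - 1 - 1 ≠ j₀ by omega, h₁]
    rw [if_neg (by omega), if_neg (by omega), if_neg h₁, if_neg h₂]
    ring
  | succ n ih =>
    intro j₀ t
    rw [gPfrom, ih j₀ (t - 1), ih j₀ (t + 1), gPfrom, gPfrom]
    ring

lemma gPfrom_mem_Icc {ε : ℝ} (hε : |ε| ≤ 1) (n : ℕ) :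
    ∀ j₀ t : ℤ, gPfrom ε j₀ n t ∈ Set.Icc 0 1 := by
  induction n with
  | zero => intro j₀ t; simp only [gPfrom]; split_ifs <;> simp
  | succ n ih =>
    intro j₀ t
    rw [gPfrom_succ_eq_first_step]
    exact convex_Icc (0 : ℝ) 1 (ih _ _) (ih _ _) (gR_nonneg hε j₀) (gL_nonneg hε j₀)
      (gR_add_gL ε j₀)

/-- `spread m a N` is the coefficient of `z ^ N` in `z ^ m * ∑ a k * z ^ (2 * k)`. -/
noncomputable def spread (m : ℕ) (a : ℕ → ℝ) (N : ℕ) : ℝ :=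
  if m ≤ N ∧ (N - m) % 2 = 0 then a ((N - m) / 2) else 0

section Spread

variable {m : ℕ} {a : ℕ → ℝ}

lemma spread_add_two_mul (k : ℕ) : spread m a (m + 2 * k) = a k := by
  rw [spread, if_pos (by omega)]
  congr
  omega

lemma spread_of_not {N : ℕ} (h : ¬(m ≤ N ∧ (N - m) % 2 = 0)) : spread m a N = 0 :=
  if_neg h

lemma abs_spread_le_one (ha : ∀ k, |a k| ≤ 1) (N : ℕ) : |spread m a N| ≤ 1 := by
  unfold spread
  split_ifs
  · exact ha _
  · simp

lemma tsum_spread_mul_pow (m : ℕ) (a : ℕ → ℝ) (z : ℝ) :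
    ∑' N, spread m a N * z ^ N = z ^ m * ∑' k, a k * z ^ (2 * k) := by
  have hinj : Function.Injective fun k : ℕ => m + 2 * k := fun k l h => by
    simp only at h
    omega
  have hsupp : Function.support (fun N => spread m a N * z ^ N) ⊆ Set.range (m + 2 * ·) := by
    intro N hN
    by_cases h : m ≤ N ∧ (N - m) % 2 = 0
    · exact ⟨(N - m) / 2, show m + 2 * _ = N by omega⟩
    · exact (hN (by simp [spread_of_not h])).elim
  rw [← hinj.tsum_eq hsupp, ← tsum_mul_left]
  refine tsum_congr fun k => ?_
  rw [spread_add_two_mul, pow_add]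
  ring

end Spread

lemma summable_norm_mul_pow {c : ℕ → ℝ} (hc : ∀ n, |c n| ≤ 1) {z : ℝ} (hz : |z| < 1) :
    Summable fun n => ‖c n * z ^ n‖ := by
  refine .of_nonneg_of_le (fun _ => norm_nonneg _) (fun n => ?_)
    (summable_geometric_of_lt_one (abs_nonneg z) hz)
  rw [norm_mul, norm_pow, Real.norm_eq_abs, Real.norm_eq_abs]
  exact mul_le_of_le_one_left (by positivity) (hc n)

noncomputable def gCoeff (ε : ℝ) (k : ℕ) : ℝ :=
  poch (ε / 2) k * poch ((ε + 1) / 2) k / (k ! : ℝ) ^ 2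

noncomputable def walkCoeff (x : ℝ) (m k : ℕ) : ℝ :=
  poch x (m + 2 * k) / (2 ^ (m + 2 * k) * (m + k)! * k !)

lemma abs_gCoeff_le_one {ε : ℝ} (hε : |ε| ≤ 1) (k : ℕ) : |gCoeff ε k| ≤ 1 := by
  have h₁ : |poch (ε / 2) k| ≤ k ! := by
    rw [← poch_one]
    exact abs_poch_le (by rw [abs_div, abs_two]; linarith [abs_nonneg ε]) k
  have h₂ : |poch ((ε + 1) / 2) k| ≤ k ! := by
    rw [← poch_one]
    exact abs_poch_le (by rw [abs_le] at hε ⊢; constructor <;> linarith) k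
  rw [gCoeff, abs_div, abs_mul, abs_of_pos (by positivity : (0 : ℝ) < (k ! : ℝ) ^ 2), sq]
  exact div_le_one_of_le₀ (mul_le_mul h₁ h₂ (abs_nonneg _) (by positivity)) (by positivity)

lemma gCoeff_eq_walkCoeff (ε : ℝ) (k : ℕ) : gCoeff ε k = walkCoeff ε 0 k := by
  rw [gCoeff, walkCoeff, zero_add, zero_add, poch_two_mul]
  field_simp

lemma walkCoeff_eq (ε : ℝ) (m k : ℕ) :
    walkCoeff (1 + ε) m k = (1 / 2) ^ m * (poch (1 + ε) m / m !) *
      (poch ((1 + ε + m) / 2) k * poch ((2 + ε + m) / 2) k / (poch ((m : ℝ) + 1) k * k !)) := by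
  have hpos : 0 < poch ((m : ℝ) + 1) k := prod_pos fun i _ => by positivity
  rw [walkCoeff, poch_add, poch_two_mul, ← factorial_mul_poch,
    show (1 + ε + m + 1) / 2 = (2 + ε + m) / 2 by ring, pow_add, one_div_pow]
  field_simp

lemma walkCoeff_zero_succ (ε : ℝ) (k : ℕ) :
    walkCoeff (1 + ε) 0 (k + 1) = walkCoeff ε 0 (k + 1) + walkCoeff (1 + ε) 1 k := by
  simp only [walkCoeff, show 0 + 2 * (k + 1) = 2 * k + 1 + 1 by ring,
    show 1 + 2 * k = 2 * k + 1 by ring, zero_add, add_comm 1 k, poch_succ (1 + ε) (2 * k + 1),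
    poch_succ' ε, add_comm ε 1, factorial_succ, pow_succ]
  push_cast
  field_simp
  ring

lemma walkCoeff_succ_zero (ε : ℝ) (m : ℕ) :
    walkCoeff (1 + ε) (m + 1) 0 = (1 + ε / (m + 1)) / 2 * walkCoeff (1 + ε) m 0 := by
  simp only [walkCoeff, mul_zero, add_zero, poch_succ, factorial_succ, pow_succ]
  push_cast
  field_simp
  ring

lemma walkCoeff_succ_succ (ε : ℝ) (m k : ℕ) :
    walkCoeff (1 + ε) (m + 1) (k + 1) = (1 - ε / (m + 1)) / 2 * walkCoeff (1 + ε) (m + 2) k +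
      (1 + ε / (m + 1)) / 2 * walkCoeff (1 + ε) m (k + 1) := by
  simp only [walkCoeff, show m + 1 + 2 * (k + 1) = m + 2 + 2 * k + 1 by ring,
    show m + 2 * (k + 1) = m + 2 + 2 * k by ring, show m + 1 + (k + 1) = m + 2 + k by ring,
    show m + (k + 1) = m + k + 1 by ring, show m + 2 + k = m + k + 1 + 1 by ring,
    poch_succ, factorial_succ, pow_succ]
  push_cast
  field_simp
  ring

/-- The coefficient of `z ^ N` on the right-hand side of the theorem for `j₀ = j`. -/
noncomputable def gillisCoeff (ε : ℝ) (j : ℤ) : ℕ → ℝ :=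
  spread j.natAbs (walkCoeff (1 + ε) j.natAbs)

section Recursion

variable (ε : ℝ)

lemma gillisCoeff_neg (j : ℤ) : gillisCoeff ε (-j) = gillisCoeff ε j := by
  simp [gillisCoeff]

lemma gillisCoeff_apply_zero (j : ℤ) : gillisCoeff ε j 0 = if j = 0 then 1 else 0 := by
  split_ifs with hj
  · simp [hj, gillisCoeff, spread, walkCoeff, poch]
  · exact spread_of_not (by omega)

lemma gillisCoeff_zero_succ (N : ℕ) :
    gillisCoeff ε 0 (N + 1) = spread 0 (gCoeff ε) (N + 1) + gillisCoeff ε 1 N := by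
  simp only [gillisCoeff, Int.natAbs_zero, Int.natAbs_one]
  by_cases hN : N % 2 = 1
  · obtain ⟨k, rfl⟩ : ∃ k, N = 1 + 2 * k := ⟨N / 2, by omega⟩
    rw [show 1 + 2 * k + 1 = 0 + 2 * (k + 1) by ring, spread_add_two_mul, spread_add_two_mul,
      spread_add_two_mul, gCoeff_eq_walkCoeff, walkCoeff_zero_succ]
  · rw [spread_of_not (by omega), spread_of_not (by omega), spread_of_not (by omega), add_zero]

lemma gillisCoeff_natCast_succ (m N : ℕ) :
    gillisCoeff ε (m + 1) (N + 1) = gR ε (m + 1) * gillisCoeff ε (m + 1 + 1) N +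
      gL ε (m + 1) * gillisCoeff ε (m + 1 - 1) N := by
  have hR : gR ε (m + 1) = (1 - ε / (m + 1)) / 2 := by rw [gR, if_neg (by omega)]; push_cast; rfl
  have hL : gL ε (m + 1) = (1 + ε / (m + 1)) / 2 := by rw [gL, if_neg (by omega)]; push_cast; rfl
  rw [hR, hL, add_sub_cancel_right]
  simp only [gillisCoeff, show ((m : ℤ) + 1).natAbs = m + 1 by omega,
    show ((m : ℤ) + 1 + 1).natAbs = m + 2 by omega, Int.natAbs_natCast]
  by_cases h : m ≤ N ∧ (N - m) % 2 = 0
  · obtain ⟨k, rfl⟩ : ∃ k, N = m + 2 * k := ⟨(N - m) / 2, by omega⟩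
    rw [show m + 2 * k + 1 = m + 1 + 2 * k by ring, spread_add_two_mul, spread_add_two_mul]
    cases k with
    | zero => rw [spread_of_not (by omega), mul_zero, zero_add, walkCoeff_succ_zero]
    | succ k =>
      rw [show m + 2 * (k + 1) = m + 2 + 2 * k by ring, spread_add_two_mul, walkCoeff_succ_succ]
  · rw [spread_of_not (by omega), spread_of_not (by omega), spread_of_not (by omega)]
    ring

lemma gillisCoeff_succ (j : ℤ) (N : ℕ) :
    gillisCoeff ε j (N + 1) = (if j = 0 then spread 0 (gCoeff ε) (N + 1) else 0) +
      gR ε j * gillisCoeff ε (j + 1) N + gL ε j * gillisCoeff ε (j - 1) N := by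
  have of_pos : ∀ j : ℤ, 0 < j → gillisCoeff ε j (N + 1) =
      gR ε j * gillisCoeff ε (j + 1) N + gL ε j * gillisCoeff ε (j - 1) N := by
    intro j hj
    obtain ⟨m, rfl⟩ : ∃ m : ℕ, j = m + 1 := ⟨(j - 1).toNat, by omega⟩
    exact gillisCoeff_natCast_succ ε m N
  rcases lt_trichotomy j 0 with hj | rfl | hj
  · rw [if_neg hj.ne, ← gillisCoeff_neg, of_pos (-j) (by omega), ← gillisCoeff_neg ε (j + 1),
      ← gillisCoeff_neg ε (j - 1), gR_neg, gL_neg, show -j + 1 = -(j - 1) by ring,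
      show -j - 1 = -(j + 1) by ring]
    ring
  · rw [if_pos rfl, gillisCoeff_zero_succ, zero_sub, gillisCoeff_neg, zero_add]
    norm_num [gR, gL]
    ring
  · rw [if_neg hj.ne', zero_add, of_pos j hj]

end Recursion

noncomputable def cauchyCoeff (ε : ℝ) (j : ℤ) (N : ℕ) : ℝ :=
  ∑ i ∈ range (N + 1), gPfrom ε j i 0 * spread 0 (gCoeff ε) (N - i)

lemma cauchyCoeff_succ (ε : ℝ) (j : ℤ) (N : ℕ) :
    cauchyCoeff ε j (N + 1) = (if j = 0 then spread 0 (gCoeff ε) (N + 1) else 0) +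
      gR ε j * cauchyCoeff ε (j + 1) N + gL ε j * cauchyCoeff ε (j - 1) N := by
  have h₀ : gPfrom ε j 0 0 * spread 0 (gCoeff ε) (N + 1) =
      if j = 0 then spread 0 (gCoeff ε) (N + 1) else 0 := by
    simp [gPfrom, eq_comm]
  rw [cauchyCoeff, sum_range_succ', Nat.sub_zero, h₀, cauchyCoeff, cauchyCoeff, mul_sum, mul_sum]
  simp only [gPfrom_succ_eq_first_step, Nat.add_sub_add_right, add_mul, sum_add_distrib, mul_assoc]
  ring

lemma cauchyCoeff_eq_gillisCoeff (ε : ℝ) (N : ℕ) :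
    ∀ j, cauchyCoeff ε j N = gillisCoeff ε j N := by
  induction N with
  | zero =>
    intro j
    simp [cauchyCoeff, gillisCoeff_apply_zero, gPfrom, spread, gCoeff, poch, eq_comm]
  | succ N ih => intro j; rw [cauchyCoeff_succ, gillisCoeff_succ, ih, ih]

lemma tsum_gPfrom_mul_tsum_gCoeff {ε : ℝ} (hε : |ε| ≤ 1) (j : ℤ) {z : ℝ} (hz : |z| < 1) :
    (∑' n, gPfrom ε j n 0 * z ^ n) * ∑' k, gCoeff ε k * z ^ (2 * k) =
      ∑' N, gillisCoeff ε j N * z ^ N := by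
  have hP : ∀ n, |gPfrom ε j n 0| ≤ 1 := fun n => by
    obtain ⟨h₀, h₁⟩ := gPfrom_mem_Icc hε n j 0
    exact abs_le.2 ⟨by linarith, h₁⟩
  have hG := tsum_spread_mul_pow 0 (gCoeff ε) z
  rw [pow_zero, one_mul] at hG
  rw [← hG, tsum_mul_tsum_eq_tsum_sum_range_of_summable_norm (summable_norm_mul_pow hP hz)
      (summable_norm_mul_pow (abs_spread_le_one (abs_gCoeff_le_one hε)) hz)]
  refine tsum_congr fun N => ?_
  rw [← cauchyCoeff_eq_gillisCoeff, cauchyCoeff, sum_mul]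
  refine sum_congr rfl fun i hi => ?_
  rw [mul_mul_mul_comm, ← pow_add, Nat.add_sub_cancel' (mem_range_succ_iff.1 hi)]

end Gillis

/-- The generating function of the probabilities of being at the origin for the Gillis walk
started at `j₀`, stated multiplicatively in terms of hypergeometric series. -/
theorem gillis_generating_function_from (ε : ℝ) (hε : ε ∈ Set.Ioo (-1 : ℝ) 1)
    (j₀ : ℤ) (z : ℝ) (hz : |z| < 1) :
    (∑' n : ℕ, gPfrom ε j₀ n 0 * z ^ n) *
      (∑' n : ℕ, poch (ε / 2) n * poch ((ε + 1) / 2) n / ((n.factorial : ℝ)) ^ 2 * z ^ (2 * n)) =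
    (z / 2) ^ j₀.natAbs * (poch (1 + ε) j₀.natAbs / (j₀.natAbs.factorial : ℝ)) *
      ∑' n : ℕ, poch ((1 + ε + (j₀.natAbs : ℝ)) / 2) n * poch ((2 + ε + (j₀.natAbs : ℝ)) / 2) n /
        (poch ((j₀.natAbs : ℝ) + 1) n * (n.factorial : ℝ)) * z ^ (2 * n) := by
  have hε' : |ε| ≤ 1 := abs_le.2 ⟨hε.1.le, hε.2.le⟩
  refine (Gillis.tsum_gPfrom_mul_tsum_gCoeff hε' j₀ hz).trans ?_
  rw [Gillis.gillisCoeff, Gillis.tsum_spread_mul_pow, ← tsum_mul_left, ← tsum_mul_left]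
  exact tsum_congr fun k => by rw [Gillis.walkCoeff_eq, div_pow, div_pow, one_pow]; ring
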